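/- Let W be a simple voting game on [n] and let Ŵ be the game obtained when player j donates its vote to player i. Then for every S⊆[n] with i,j∉S, the YES-efficacy scores satisfy α̂⁺_i(S∪{i}) ≥ max( α⁺_i(S∪{i}), α⁺_j(S∪{j}) ) and α̂⁺_i(S∪{i,j}) ≥ max( α⁺_i(S∪{i,j}), α⁺_j(S∪{i,j}) ), where α̂ denotes efficacy scores computed in Ŵ and α those computed in W. -/

import Mathlib

open Finset

variable {α : Type*} [Fintype α] [DecidableEq α]

/-- A simple voting game on the player set `α`: a monotone collection of winning
coalitions in which the empty coalition loses and the full coalition wins. -/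
def SimpleVotingGame (W : Finset (Finset α)) : Prop :=
  (∀ S T : Finset α, S ∈ W → S ⊆ T → T ∈ W) ∧ (∅ : Finset α) ∉ W ∧ (univ : Finset α) ∈ W

/-- Player `i` is YES-decisive in the division `S`. -/
def YesDecisive (W : Finset (Finset α)) (i : α) (S : Finset α) : Prop :=
  i ∈ S ∧ S ∈ W ∧ S.erase i ∉ W

/-- Player `i` is NO-decisive in the division `S`. -/
def NoDecisive (W : Finset (Finset α)) (i : α) (S : Finset α) : Prop :=
  i ∉ S ∧ S ∉ W ∧ insert i S ∈ W

/-- The loyal children of a winning division `S`: the winning divisions `S \ {k}`, `k ∈ S`. -/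
def LCwin (W : Finset (Finset α)) (S : Finset α) : Finset (Finset α) :=
  (S.image fun k => S.erase k).filter (· ∈ W)

/-- The loyal children of a losing division `S`: the losing divisions `S ∪ {k}`, `k ∉ S`. -/
def LCloss (W : Finset (Finset α)) (S : Finset α) : Finset (Finset α) :=
  (Sᶜ.image fun k => insert k S).filter (· ∉ W)

/-- The YES-efficacy score `α⁺_i(S)`: `1` if `i` is YES-decisive in `S`, `0` if `S` is
losing or `i ∉ S`, and otherwise the arithmetic mean of `α⁺_i` over the loyal children. -/
noncomputable def alphaPlus (W : Finset (Finset α)) (i : α) (S : Finset α) : ℝ :=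
  if i ∈ S ∧ S ∈ W ∧ S.erase i ∉ W then 1
  else if S ∉ W ∨ i ∉ S then 0
  else (∑ T ∈ (LCwin W S).attach, alphaPlus W i T.1) / (LCwin W S).card
termination_by S.card
decreasing_by
  obtain ⟨T, hT⟩ := T
  simp only [LCwin, Finset.mem_filter, Finset.mem_image] at hT
  obtain ⟨⟨k, hk, rfl⟩, -⟩ := hT
  simpa using Finset.card_erase_lt_of_mem hk

/-- The NO-efficacy score `α⁻_i(S)`: `1` if `i` is NO-decisive in `S`, `0` if `S` is
winning or `i ∈ S`, and otherwise the arithmetic mean of `α⁻_i` over the loyal children. -/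
noncomputable def alphaMinus (W : Finset (Finset α)) (i : α) (S : Finset α) : ℝ :=
  if i ∉ S ∧ S ∉ W ∧ insert i S ∈ W then 1
  else if S ∈ W ∨ i ∈ S then 0
  else (∑ T ∈ (LCloss W S).attach, alphaMinus W i T.1) / (LCloss W S).card
termination_by Sᶜ.card
decreasing_by
  obtain ⟨T, hT⟩ := T
  simp only [LCloss, Finset.mem_filter, Finset.mem_image] at hT
  obtain ⟨⟨k, hk, rfl⟩, -⟩ := hT
  rw [Finset.compl_insert]
  exact Finset.card_erase_lt_of_mem hk

/-- The efficacy score `α_i(S) = α⁺_i(S) + α⁻_i(S)`. -/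
noncomputable def alphaScore (W : Finset (Finset α)) (i : α) (S : Finset α) : ℝ :=
  alphaPlus W i S + alphaMinus W i S

/-- The Recursive Measure of YES-voting power (a priori, equiprobable divisions). -/
noncomputable def RMplus (W : Finset (Finset α)) (i : α) : ℝ :=
  (1 / 2 ^ Fintype.card α) * ∑ S : Finset α, alphaPlus W i S

/-- The Recursive Measure of NO-voting power (a priori, equiprobable divisions). -/
noncomputable def RMminus (W : Finset (Finset α)) (i : α) : ℝ :=
  (1 / 2 ^ Fintype.card α) * ∑ S : Finset α, alphaMinus W i S

/-- The Recursive Measure of voting power of player `i` (a priori):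
`RM_i = 2^{-m} · Σ_S α_i(S)` where `m` is the number of players. -/
noncomputable def RM (W : Finset (Finset α)) (i : α) : ℝ :=
  (1 / 2 ^ Fintype.card α) * ∑ S : Finset α, alphaScore W i S

/-- `d` is a dummy voter: `d` is decisive in no division. -/
def IsDummy (W : Finset (Finset α)) (d : α) : Prop :=
  ∀ S : Finset α, d ∉ S → (insert d S ∈ W ↔ S ∈ W)

/-- Player `j` weakly dominates player `i`. -/
def WeaklyDominates (W : Finset (Finset α)) (j i : α) : Prop :=
  ∀ S : Finset α, i ∉ S → j ∉ S → insert i S ∈ W → insert j S ∈ W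

/-- `What` is the game obtained from `W` by player `j` donating its vote to player `i`. -/
def Donation (W What : Finset (Finset α)) (i j : α) : Prop :=
  ∀ S : Finset α, i ∉ S → j ∉ S →
    (insert i (insert j S) ∈ What ↔ insert i (insert j S) ∈ W) ∧
    (insert i S ∈ What ↔ insert i (insert j S) ∈ W) ∧
    (insert j S ∈ What ↔ S ∈ W) ∧
    (S ∈ What ↔ S ∈ W)

/-- `What` is obtained from `W` by inducing a (weak, symmetric) quarrel between `i` and `j`. -/
def Quarrel (W What : Finset (Finset α)) (i j : α) : Prop :=
  ∀ S : Finset α, i ∉ S → j ∉ S →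
    (insert i (insert j S) ∈ What ↔ (insert i S ∈ W ∨ insert j S ∈ W)) ∧
    (S ∈ What ↔ (insert i S ∈ W ∧ insert j S ∈ W)) ∧
    (insert i S ∈ What ↔ insert i S ∈ W) ∧
    (insert j S ∈ What ↔ insert j S ∈ W)

/-- The voting-independent (product) probability of a division `S`, given the
individual YES-vote probabilities `p`. -/
noncomputable def prodDist (p : α → ℝ) (S : Finset α) : ℝ :=
  (∏ k ∈ S, p k) * ∏ k ∈ Sᶜ, (1 - p k)

/-- The generalized Recursive Measure of YES-voting power under a
voting-independent probability distribution with vote probabilities `p`. -/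
noncomputable def RMplusP (W : Finset (Finset α)) (p : α → ℝ) (i : α) : ℝ :=
  ∑ S : Finset α, alphaPlus W i S * prodDist p S

/-- The generalized Recursive Measure of NO-voting power under a
voting-independent probability distribution with vote probabilities `p`. -/
noncomputable def RMminusP (W : Finset (Finset α)) (p : α → ℝ) (i : α) : ℝ :=
  ∑ S : Finset α, alphaMinus W i S * prodDist p S

/-! In the donated game `Ŵ` player `i` carries `j`'s vote, while `j` has become a dummy.
Both inequalities follow by strong induction on `S`, comparing the averages over loyal children.
Every loyal child of `S ∪ {i}` or of `S ∪ {j}` in `W` corresponds to a loyal child of `S ∪ {i}`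
in `Ŵ` with at least the same score, and the additional loyal children in `Ŵ` are divisions in
which `i` is YES-decisive, so they score `1` and can only raise an average of numbers at most `1`.
For `S ∪ {i, j}` the loyal children in `W` and in `Ŵ` are the same divisions, and the two obtained
by removing `i` or `j` are controlled by the first inequality. -/

section

variable {β : Type*} [DecidableEq β] {W : Finset (Finset β)} {i j p a : β} {S T U : Finset β}

lemma ssubset_of_mem_LCwin (hT : T ∈ LCwin W S) : T ⊂ S := by
  obtain ⟨⟨k, hk, rfl⟩, -⟩ : (∃ k ∈ S, S.erase k = T) ∧ T ∈ W := by simpa [LCwin] using hT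
  exact erase_ssubset hk

theorem alphaPlus_nonneg (W : Finset (Finset β)) (i : β) (S : Finset β) :
    0 ≤ alphaPlus W i S := by
  induction S using Finset.strongInduction with
  | H S ih =>
    rw [alphaPlus]
    split_ifs
    · exact zero_le_one
    · exact le_rfl
    · exact div_nonneg (sum_nonneg fun T _ => ih T (ssubset_of_mem_LCwin T.2)) (Nat.cast_nonneg _)

theorem alphaPlus_le_one (W : Finset (Finset β)) (i : β) (S : Finset β) :
    alphaPlus W i S ≤ 1 := by
  induction S using Finset.strongInduction with
  | H S ih =>
    rw [alphaPlus]
    split_ifs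
    · exact le_rfl
    · exact zero_le_one
    · refine div_le_one_of_le₀ ?_ (Nat.cast_nonneg _)
      calc ∑ T ∈ (LCwin W S).attach, alphaPlus W i T.1
          ≤ ∑ _T ∈ (LCwin W S).attach, (1 : ℝ) :=
            sum_le_sum fun T _ => ih T (ssubset_of_mem_LCwin T.2)
        _ = #(LCwin W S) := by simp

lemma alphaPlus_of_yesDecisive (h : YesDecisive W i S) : alphaPlus W i S = 1 := by
  rw [alphaPlus]
  exact if_pos h

lemma alphaPlus_of_notMem (h : i ∉ S) : alphaPlus W i S = 0 := by
  rw [alphaPlus, if_neg fun hc => h hc.1, if_pos (Or.inr h)]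

lemma alphaPlus_of_losing (h : S ∉ W) : alphaPlus W i S = 0 := by
  rw [alphaPlus, if_neg fun hc => h hc.2.1, if_pos (Or.inl h)]

lemma alphaPlus_eq_sum_div (hi : i ∈ S) (hS : S ∈ W) (hSi : S.erase i ∈ W) :
    alphaPlus W i S =
      (∑ k ∈ S with S.erase k ∈ W, alphaPlus W i (S.erase k)) / #{k ∈ S | S.erase k ∈ W} := by
  have hinj : Set.InjOn S.erase ↑{k ∈ S | S.erase k ∈ W} :=
    (erase_injOn S).mono (coe_subset.2 (filter_subset _ _))
  rw [alphaPlus, if_neg fun h => h.2.2 hSi, if_neg (not_or.2 ⟨not_not.2 hS, not_not.2 hi⟩),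
    sum_attach, LCwin, filter_image, sum_image hinj, card_image_of_injOn hinj]

lemma filter_erase_insert {P : Finset β → Prop} [DecidablePred P] (ha : a ∉ U) (hU : P U) :
    {k ∈ insert a U | P ((insert a U).erase k)} = insert a {k ∈ U | P (insert a (U.erase k))} := by
  rw [filter_insert, erase_insert ha, if_pos hU]
  congr 1
  exact filter_congr fun k hk => by rw [erase_insert_of_ne (ne_of_mem_of_not_mem hk ha).symm]

lemma alphaPlus_insert_eq (hp : p ∈ insert a U) (hS : insert a U ∈ W)
    (hSp : (insert a U).erase p ∈ W) (ha : a ∉ U) (hU : U ∈ W) :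
    alphaPlus W p (insert a U) =
      (alphaPlus W p U +
        ∑ k ∈ U with insert a (U.erase k) ∈ W, alphaPlus W p (insert a (U.erase k)))
        / (#{k ∈ U | insert a (U.erase k) ∈ W} + 1) := by
  have ha' : a ∉ {k ∈ U | insert a (U.erase k) ∈ W} := fun h => ha (mem_filter.1 h).1
  rw [alphaPlus_eq_sum_div hp hS hSp, filter_erase_insert (P := (· ∈ W)) ha hU, sum_insert ha',
    card_insert_of_notMem ha', erase_insert ha, Nat.cast_succ]
  congr 2
  exact sum_congr rfl fun k hk => by
    rw [erase_insert_of_ne (ne_of_mem_of_not_mem (mem_filter.1 hk).1 ha).symm]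

lemma alphaPlus_insert_self_eq (hp : p ∉ T) (hS : insert p T ∈ W) (hT : T ∈ W) :
    alphaPlus W p (insert p T) =
      (∑ k ∈ T with insert p (T.erase k) ∈ W, alphaPlus W p (insert p (T.erase k)))
        / (#{k ∈ T | insert p (T.erase k) ∈ W} + 1) := by
  rw [alphaPlus_insert_eq (mem_insert_self p T) hS (by rwa [erase_insert hp]) hp hT,
    alphaPlus_of_notMem hp, zero_add]

lemma alphaPlus_insert_insert_eq (hij : i ≠ j) (hi : i ∉ T) (hj : j ∉ T) (hp : p = i ∨ p = j)
    (hS : insert i (insert j T) ∈ W) (hTi : insert i T ∈ W) (hTj : insert j T ∈ W) :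
    alphaPlus W p (insert i (insert j T)) =
      (alphaPlus W p (insert j T) + alphaPlus W p (insert i T) +
        ∑ k ∈ T with insert i (insert j (T.erase k)) ∈ W,
          alphaPlus W p (insert i (insert j (T.erase k))))
        / (#{k ∈ T | insert i (insert j (T.erase k)) ∈ W} + 2) := by
  have hi' : i ∉ insert j T := by simp [hij, hi]
  have hSp : (insert i (insert j T)).erase p ∈ W := by
    rcases hp with rfl | rfl
    · rwa [erase_insert hi']
    · rwa [insert_comm, erase_insert (by simp [hij.symm, hj])]
  have hj' : j ∉ {k ∈ T | insert i (insert j (T.erase k)) ∈ W} := fun h => hj (mem_filter.1 h).1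
  rw [alphaPlus_insert_eq (by rcases hp with rfl | rfl <;> simp) hS hSp hi' hTj,
    filter_erase_insert (P := (insert i · ∈ W)) hj hTi, sum_insert hj', card_insert_of_notMem hj',
    erase_insert hj, add_assoc, Nat.cast_succ, add_assoc, one_add_one_eq_two]
  congr 3
  exact sum_congr rfl fun k hk => by
    rw [erase_insert_of_ne (ne_of_mem_of_not_mem (mem_filter.1 hk).1 hj).symm]

end

lemma sum_div_card_add_one_le_of_subset {ι : Type*} [DecidableEq ι] {A B : Finset ι}
    {f g : ι → ℝ} (hAB : A ⊆ B) (hf : ∀ k ∈ A, f k ≤ 1) (hfg : ∀ k ∈ A, f k ≤ g k)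
    (hg : ∀ k ∈ B \ A, g k = 1) :
    (∑ k ∈ A, f k) / (#A + 1) ≤ (∑ k ∈ B, g k) / (#B + 1) := by
  have hsumB : ∑ k ∈ B, g k = (#B - #A : ℝ) + ∑ k ∈ A, g k := by
    rw [← sum_sdiff hAB, sum_congr rfl hg, sum_const, card_sdiff_of_subset hAB, nsmul_one,
      Nat.cast_sub (card_le_card hAB)]
  have hfA : ∑ k ∈ A, f k ≤ #A := by simpa using sum_le_card_nsmul A f 1 hf
  have hfgA : ∑ k ∈ A, f k ≤ ∑ k ∈ A, g k := sum_le_sum hfg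
  have hAB' : (#A : ℝ) ≤ #B := by exact_mod_cast card_le_card hAB
  rw [div_le_div_iff₀ (by positivity) (by positivity), hsumB]
  nlinarith [mul_nonneg (sub_nonneg.2 hfgA) (by positivity : (0 : ℝ) ≤ #A + 1),
    mul_nonneg (sub_nonneg.2 hAB') (by linarith : (0 : ℝ) ≤ #A + 1 - ∑ k ∈ A, f k)]

namespace Donation

variable {β : Type*} [DecidableEq β] {W What : Finset (Finset β)} {i j p : β} {T U : Finset β}

lemma alphaPlus_insert_eq_one (hdon : Donation W What i j) (hi : i ∉ U) (hj : j ∉ U)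
    (hU : insert i (insert j U) ∈ W) (hU' : U ∉ W) : alphaPlus What i (insert i U) = 1 :=
  alphaPlus_of_yesDecisive ⟨mem_insert_self i U, (hdon U hi hj).2.1.2 hU,
    by rw [erase_insert hi]; exact fun h => hU' ((hdon U hi hj).2.2.2.1 h)⟩

theorem alphaPlus_insert_le (hW : IsUpperSet (W : Set (Finset β)))
    (hdon : Donation W What i j) (hp : p = i ∨ p = j) (hi : i ∉ T) (hj : j ∉ T) :
    alphaPlus W p (insert p T) ≤ alphaPlus What i (insert i T) := by
  induction T using Finset.strongInduction with
  | H T ih =>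
    have hpT : p ∉ T := by rcases hp with rfl | rfl <;> assumption
    have hsub : ∀ U : Finset β, insert p U ⊆ insert i (insert j U) := by
      rcases hp with rfl | rfl <;> intro U
      · exact insert_subset_insert _ (subset_insert _ _)
      · exact subset_insert _ _
    have hiT : ∀ k, i ∉ T.erase k := fun k h => hi (mem_of_mem_erase h)
    have hjT : ∀ k, j ∉ T.erase k := fun k h => hj (mem_of_mem_erase h)
    by_cases hS : insert i (insert j T) ∈ W
    swap
    · rw [alphaPlus_of_losing fun h => hS (hW (hsub T) h)]
      exact alphaPlus_nonneg _ _ _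
    by_cases hT : T ∈ W
    swap
    · rw [hdon.alphaPlus_insert_eq_one hi hj hS hT]
      exact alphaPlus_le_one _ _ _
    rw [alphaPlus_insert_self_eq hpT (hW (subset_insert p T) hT) hT,
      alphaPlus_insert_self_eq hi ((hdon T hi hj).2.1.2 hS) ((hdon T hi hj).2.2.2.2 hT)]
    apply sum_div_card_add_one_le_of_subset
    · intro k hk
      rw [mem_filter] at hk ⊢
      exact ⟨hk.1, (hdon _ (hiT k) (hjT k)).2.1.2 (hW (hsub _) hk.2)⟩
    · exact fun k _ => alphaPlus_le_one _ _ _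
    · exact fun k hk => ih _ (erase_ssubset (mem_filter.1 hk).1) (hiT k) (hjT k)
    · intro k hk
      simp only [mem_sdiff, mem_filter, not_and] at hk
      obtain ⟨⟨hkT, hkWhat⟩, hkW⟩ := hk
      refine hdon.alphaPlus_insert_eq_one (hiT k) (hjT k) ((hdon _ (hiT k) (hjT k)).2.1.1 hkWhat) ?_
      exact fun h => hkW hkT (hW (subset_insert p _) h)

theorem alphaPlus_insert_insert_le (hW : IsUpperSet (W : Set (Finset β)))
    (hdon : Donation W What i j) (hij : i ≠ j) (hp : p = i ∨ p = j) (hi : i ∉ T) (hj : j ∉ T) :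
    alphaPlus W p (insert i (insert j T)) ≤ alphaPlus What i (insert i (insert j T)) := by
  induction T using Finset.strongInduction with
  | H T ih =>
    obtain ⟨hdS, hdTi, hdTj, -⟩ := hdon T hi hj
    have hiT : ∀ k, i ∉ T.erase k := fun k h => hi (mem_of_mem_erase h)
    have hjT : ∀ k, j ∉ T.erase k := fun k h => hj (mem_of_mem_erase h)
    have hij' : i ∉ insert j T := by simp [hij, hi]
    by_cases hS : insert i (insert j T) ∈ W
    swap
    · rw [alphaPlus_of_losing hS]
      exact alphaPlus_nonneg _ _ _
    by_cases hT : T ∈ W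
    swap
    · rw [alphaPlus_of_yesDecisive ⟨mem_insert_self _ _, hdS.2 hS,
        by rw [erase_insert hij']; exact fun h => hT (hdTj.1 h)⟩]
      exact alphaPlus_le_one _ _ _
    have hfilter : {k ∈ T | insert i (insert j (T.erase k)) ∈ What} =
        {k ∈ T | insert i (insert j (T.erase k)) ∈ W} :=
      filter_congr fun k _ => (hdon _ (hiT k) (hjT k)).1
    have hpivot : alphaPlus W p (insert j T) + alphaPlus W p (insert i T) ≤
        alphaPlus What i (insert j T) + alphaPlus What i (insert i T) := by
      rw [alphaPlus_of_notMem hij', zero_add]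
      rcases hp with rfl | rfl
      · rw [alphaPlus_of_notMem hij', zero_add]
        exact hdon.alphaPlus_insert_le hW (Or.inl rfl) hi hj
      · rw [alphaPlus_of_notMem (by simp [hij.symm, hj] : p ∉ insert i T), add_zero]
        exact hdon.alphaPlus_insert_le hW (Or.inr rfl) hi hj
    rw [alphaPlus_insert_insert_eq hij hi hj hp hS (hW (subset_insert _ _) hT)
        (hW (subset_insert _ _) hT),
      alphaPlus_insert_insert_eq hij hi hj (Or.inl rfl) (hdS.2 hS) (hdTi.2 hS) (hdTj.2 hT), hfilter]
    refine div_le_div_of_nonneg_right (add_le_add hpivot (sum_le_sum fun k hk => ?_))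
      (by positivity)
    exact ih _ (erase_ssubset (mem_filter.1 hk).1) (hiT k) (hjT k)

end Donation

/-- donation and YES-efficacy scores. -/
theorem donation_alphaPlus {n : ℕ} (W What : Finset (Finset (Fin n)))
    (hW : SimpleVotingGame W) (i j : Fin n) (hij : i ≠ j)
    (hdon : Donation W What i j) :
    ∀ S : Finset (Fin n), i ∉ S → j ∉ S →
      max (alphaPlus W i (insert i S)) (alphaPlus W j (insert j S)) ≤
        alphaPlus What i (insert i S) ∧
      max (alphaPlus W i (insert i (insert j S))) (alphaPlus W j (insert i (insert j S))) ≤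
        alphaPlus What i (insert i (insert j S)) := by
  have hup : IsUpperSet (W : Set (Finset (Fin n))) := fun S T hST hS => hW.1 S T hS hST
  intro S hi hj
  exact ⟨max_le (hdon.alphaPlus_insert_le hup (Or.inl rfl) hi hj)
      (hdon.alphaPlus_insert_le hup (Or.inr rfl) hi hj),
    max_le (hdon.alphaPlus_insert_insert_le hup hij (Or.inl rfl) hi hj)
      (hdon.alphaPlus_insert_insert_le hup hij (Or.inr rfl) hi hj)⟩
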